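/- Let 0 < τ₁ < ⋯ < τ_M ≤ 1, Q the collocation matrix, and Q_{Δ,m} = diag(τ₁/m, …, τ_M/m) for m = 1, …, M. Then the product (I − Q_{Δ,M}⁻¹Q)(I − Q_{Δ,M−1}⁻¹Q) ⋯ (I − Q_{Δ,1}⁻¹Q) equals the zero matrix. -/

import Mathlib

open Polynomial Matrix Finset

noncomputable def collMat {M : ℕ} (τ : Fin M → ℝ) : Matrix (Fin M) (Fin M) ℝ :=
  Matrix.of fun i j => ∫ s in (0:ℝ)..(τ i), (Lagrange.basis Finset.univ τ j).eval s

/-!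
`Q` integrates the Lagrange interpolant, and interpolation on `M` distinct nodes reproduces
polynomials of degree `< M`; hence `Q τⁿ = τⁿ⁺¹ / (n + 1)`, so the power vector `τⁿ` is an
eigenvector of `I - Q_{Δ,m}⁻¹ Q` with eigenvalue `1 - m / (n + 1)`. Every power vector `τⁿ`,
`n < M`, is therefore killed by the factor with `m = n + 1`, and since the factors act on it by
scalars, by the whole product. The `τⁿ` are the columns of the invertible Vandermonde matrix, so
the product is zero.
-/

theorem Matrix.list_prod_mulVec_eq_smul {ι R n : Type*} [Fintype n] [DecidableEq n] [CommRing R]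
    (A : ι → Matrix n n R) (μ : ι → R) (v : n → R) (hA : ∀ k, A k *ᵥ v = μ k • v)
    (L : List ι) : (L.map A).prod *ᵥ v = (L.map μ).prod • v := by
  induction L with
  | nil => simp
  | cons k L ih =>
    rw [List.map_cons, List.prod_cons, ← mulVec_mulVec, ih, mulVec_smul, hA, smul_smul,
      List.map_cons, List.prod_cons, mul_comm]

theorem Matrix.eq_zero_of_mulVec_pow_eq_zero {K : Type*} [Field K] {M : ℕ}
    {τ : Fin M → K} (hτ : Function.Injective τ) {P : Matrix (Fin M) (Fin M) K}
    (hP : ∀ n < M, P *ᵥ (fun i => τ i ^ n) = 0) : P = 0 := by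
  have hV : IsUnit (vandermonde τ) := by
    rw [isUnit_iff_isUnit_det]
    exact (det_vandermonde_ne_zero_iff.mpr hτ).isUnit
  refine hV.mul_left_eq_zero.mp (ext fun i j => ?_)
  simpa [mul_apply, mulVec, dotProduct] using congrFun (hP j j.2) i

theorem Matrix.inv_diagonal_div {n K : Type*} [Fintype n] [DecidableEq n] [Field K]
    {τ : n → K} (hτ : ∀ i, τ i ≠ 0) {c : K} (hc : c ≠ 0) :
    (diagonal fun i => τ i / c)⁻¹ = diagonal fun i => c / τ i := by
  refine inv_eq_left_inv ?_
  rw [diagonal_mul_diagonal, ← diagonal_one]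
  congr 1
  funext i
  field_simp [hτ i]

theorem collMat_mulVec {M : ℕ} (τ : Fin M → ℝ) (v : Fin M → ℝ) :
    collMat τ *ᵥ v =
      fun i => ∫ s in (0:ℝ)..(τ i), (Lagrange.interpolate univ τ v).eval s := by
  funext i
  simp only [mulVec, dotProduct, collMat, of_apply, ← intervalIntegral.integral_mul_const]
  rw [← intervalIntegral.integral_finsetSum
    fun j _ => (by fun_prop : Continuous _).intervalIntegrable _ _]
  simp [Lagrange.interpolate_apply, eval_finsetSum, mul_comm]

theorem Lagrange.interpolate_univ_pow {F ι : Type*} [Field F] [Fintype ι] [DecidableEq ι]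
    {τ : ι → F} (hτ : Function.Injective τ) {n : ℕ} (hn : n < Fintype.card ι) :
    Lagrange.interpolate univ τ (fun j => τ j ^ n) = X ^ n := by
  have hdeg : (X ^ n : F[X]).degree < (univ : Finset ι).card := by
    simpa [degree_X_pow] using (Nat.cast_lt.mpr hn : (n : WithBot ℕ) < Fintype.card ι)
  simpa using (Lagrange.eq_interpolate hτ.injOn hdeg).symm

theorem collMat_mulVec_pow {M : ℕ} {τ : Fin M → ℝ} (hτ : Function.Injective τ) {n : ℕ}
    (hn : n < M) : collMat τ *ᵥ (fun i => τ i ^ n) = fun i => τ i ^ (n + 1) / (n + 1) := by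
  rw [collMat_mulVec, Lagrange.interpolate_univ_pow hτ (by simpa using hn)]
  simp [integral_pow]

theorem sub_collMat_mulVec_pow {M : ℕ} {τ : Fin M → ℝ} (hτ : Function.Injective τ)
    (hτ0 : ∀ i, τ i ≠ 0) {c : ℝ} (hc : c ≠ 0) {n : ℕ} (hn : n < M) :
    (1 - (diagonal fun i => τ i / c)⁻¹ * collMat τ) *ᵥ (fun i => τ i ^ n)
      = (1 - c / (n + 1)) • fun i => τ i ^ n := by
  rw [inv_diagonal_div hτ0 hc, sub_mulVec, one_mulVec, ← mulVec_mulVec,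
    collMat_mulVec_pow hτ hn]
  funext i
  simp only [Pi.sub_apply, Pi.smul_apply, smul_eq_mul, mulVec_diagonal]
  field_simp [hτ0 i]
  ring

theorem minSRFLEX_product_zero_general (M : ℕ) (τ : Fin M → ℝ) (hmono : StrictMono τ)
    (hpos : ∀ i, 0 < τ i) :
    (((List.range M).reverse.map (fun k =>
        1 - (Matrix.diagonal fun i => τ i / (k + 1 : ℕ))⁻¹ * collMat τ)).prod :
      Matrix (Fin M) (Fin M) ℝ) = 0 := by
  refine eq_zero_of_mulVec_pow_eq_zero hmono.injective fun n hn => ?_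
  rw [list_prod_mulVec_eq_smul _ (fun k : ℕ => 1 - ((k + 1 : ℕ) : ℝ) / (n + 1)) _
    (fun k => sub_collMat_mulVec_pow hmono.injective (fun i => (hpos i).ne')
      (Nat.cast_ne_zero.mpr k.succ_ne_zero) hn)]
  have hfactor :
      (0 : ℝ) ∈ (List.range M).reverse.map fun k : ℕ => 1 - ((k + 1 : ℕ) : ℝ) / (n + 1) :=
    List.mem_map.mpr ⟨n, by simpa using hn, by field_simp; push_cast; ring⟩
  rw [List.prod_eq_zero hfactor, zero_smul]

/-- Theorem 2.8, MIN-SR-FLEX: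
`(I - Q_{Δ,M}⁻¹Q)(I - Q_{Δ,M-1}⁻¹Q)⋯(I - Q_{Δ,1}⁻¹Q) = 0`. -/
theorem minSRFLEX_product_zero (M : ℕ) (hM : 1 ≤ M) (τ : Fin M → ℝ) (hmono : StrictMono τ)
    (hpos : ∀ i, 0 < τ i) (h1 : ∀ i, τ i ≤ 1) :
    (((List.range M).reverse.map (fun k =>
        1 - (Matrix.diagonal fun i => τ i / (k + 1 : ℕ))⁻¹ * collMat τ)).prod :
      Matrix (Fin M) (Fin M) ℝ) = 0 :=
  minSRFLEX_product_zero_general M τ hmono hpos
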